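/- Let d ≥ 1, let V satisfy Assumption (A), and let φ be the Hamiltonian flow of p. Fix T > 0 and ν > 1/2, and for R ≥ 1 set f_R(x, ξ) = ⟨x/R⟩^(−2ν) (R² + p(x, ξ))^(1/2). Then there exist constants C > 0 and N ≥ 0 such that for all R ≥ 1, all t ∈ [−T, T], and all ρ₀, ρ ∈ ℝ^{2d}: (f_R ∘ φ^t)(ρ₀ + ρ) ≤ C (f_R ∘ φ^t)(ρ₀) ⟨ρ⟩^N. That is, f_R ∘ φ^t is an order function with structure constants uniform in t ∈ [−T, T] and R ≥ 1. -/

import Mathlib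

open Real MeasureTheory

noncomputable section

abbrev E (d : ℕ) := EuclideanSpace ℝ (Fin d)

/-- Assumption (A): `V` is smooth, nonnegative, comparable to `⟨x⟩^{2m}` with `m ∈ (0,1]`,
with derivative bounds `‖D^k V(x)‖ ≤ C_k ⟨x⟩^{2m-k}`. Here `⟨x⟩^s = (1+‖x‖²)^{s/2}`. -/
def AssumptionA {d : ℕ} (V : E d → ℝ) (m : ℝ) : Prop :=
  ContDiff ℝ (⊤ : ℕ∞) V ∧ (∀ x, 0 ≤ V x) ∧ 0 < m ∧ m ≤ 1 ∧
  (∃ C > 0, ∀ x : E d, C⁻¹ * (1 + ‖x‖ ^ 2) ^ m - C ≤ V x ∧ V x ≤ C * (1 + ‖x‖ ^ 2) ^ m) ∧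
  (∀ k : ℕ, ∃ Ck > 0, ∀ x : E d,
    ‖iteratedFDeriv ℝ k V x‖ ≤ Ck * (1 + ‖x‖ ^ 2) ^ (m - (k : ℝ) / 2))

/-- The classical Hamiltonian `p(x,ξ) = ½|ξ|² + V(x)`. -/
def ham {d : ℕ} (V : E d → ℝ) (ρ : E d × E d) : ℝ := (1 / 2) * ‖ρ.2‖ ^ 2 + V ρ.1

/-- The Hamiltonian flow of `p`: smooth in `(t,ρ)`, `φ⁰ = id`, and
`d/dt φᵗ(x,ξ) = (ξᵗ, -∇V(xᵗ))`. -/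
def IsHamFlow {d : ℕ} (V : E d → ℝ) (φ : ℝ → E d × E d → E d × E d) : Prop :=
  ContDiff ℝ (⊤ : ℕ∞) (fun q : ℝ × (E d × E d) => φ q.1 q.2) ∧
  (∀ ρ, φ 0 ρ = ρ) ∧
  (∀ t ρ, HasDerivAt (fun s => φ s ρ) ((φ t ρ).2, -(gradient V (φ t ρ).1)) t)

/-- The weight `f_R(x,ξ) = ⟨x/R⟩^{-2ν} (R² + p(x,ξ))^{1/2}`. -/
def fR {d : ℕ} (V : E d → ℝ) (ν R : ℝ) (ρ : E d × E d) : ℝ :=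
  (1 + ‖R⁻¹ • ρ.1‖ ^ 2) ^ (-ν) * Real.sqrt (R ^ 2 + ham V ρ)

/-! ### Auxiliary lemmas -/

/-- Energy conservation along the Hamiltonian flow. -/
lemma ham_flow_const {d : ℕ} (V : E d → ℝ) (hV : ContDiff ℝ (⊤ : ℕ∞) V)
    (φ : ℝ → E d × E d → E d × E d) (hφ : IsHamFlow V φ) (t : ℝ) (ρ : E d × E d) :
    ham V (φ t ρ) = ham V ρ := by
  have hderiv : ∀ s : ℝ, HasDerivAt (fun u => ham V (φ u ρ)) 0 s := by
    intro s
    have hg := hφ.2.2 s ρ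
    have hg1 : HasDerivAt (fun u => (φ u ρ).1) (φ s ρ).2 s := hg.fst
    have hg2 : HasDerivAt (fun u => (φ u ρ).2) (-(gradient V (φ s ρ).1)) s := hg.snd
    have hVd : HasGradientAt V (gradient V (φ s ρ).1) (φ s ρ).1 :=
      ((hV.differentiable (by simp)) (φ s ρ).1).hasGradientAt
    have hB : HasDerivAt (fun u => V ((φ u ρ).1))
        ((InnerProductSpace.toDual ℝ (E d) (gradient V (φ s ρ).1)) ((φ s ρ).2)) s :=
      hVd.hasFDerivAt.comp_hasDerivAt s hg1
    have hA : HasDerivAt (fun u => (1/2 : ℝ) * (inner ℝ ((φ u ρ).2) ((φ u ρ).2) : ℝ))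
        ((1/2 : ℝ) * ((inner ℝ ((φ s ρ).2) (-(gradient V (φ s ρ).1)) : ℝ) +
          (inner ℝ (-(gradient V (φ s ρ).1)) ((φ s ρ).2) : ℝ))) s :=
      (hg2.inner ℝ hg2).const_mul _
    have hsum := hA.add hB
    have heq : (fun u => (1/2 : ℝ) * (inner ℝ ((φ u ρ).2) ((φ u ρ).2) : ℝ) + V ((φ u ρ).1))
        = fun u => ham V (φ u ρ) := by
      funext u; simp only [ham, real_inner_self_eq_norm_sq]
    rw [show ((fun u => (1/2 : ℝ) * (inner ℝ ((φ u ρ).2) ((φ u ρ).2) : ℝ)) + fun u => V ((φ u ρ).1))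
        = fun u => ham V (φ u ρ) from heq] at hsum
    refine hsum.congr_deriv ?_
    rw [InnerProductSpace.toDual_apply_apply]
    rw [inner_neg_right, inner_neg_left, real_inner_comm]
    ring
  have hdiff : Differentiable ℝ (fun u => ham V (φ u ρ)) := fun s => (hderiv s).differentiableAt
  have h0 : ∀ s, deriv (fun u => ham V (φ u ρ)) s = 0 := fun s => (hderiv s).deriv
  have := is_const_of_deriv_eq_zero hdiff h0 t 0
  simpa [hφ.2.1 ρ] using this

/-- The gradient of `V` is globally Lipschitz. -/
lemma grad_lipschitz {d : ℕ} (V : E d → ℝ) (m : ℝ) (hV : AssumptionA V m) :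
    ∃ K : NNReal, LipschitzWith K (fun x => gradient V x) := by
  obtain ⟨C2, hC2pos, hC2⟩ := hV.2.2.2.2.2 2
  have hm1 : m ≤ 1 := hV.2.2.2.1
  have hfd : ContDiff ℝ (⊤ : ℕ∞) (fderiv ℝ V) := hV.1.fderiv_right (by simp)
  have hbound : ∀ x, ‖fderiv ℝ (fderiv ℝ V) x‖₊ ≤ C2.toNNReal := by
    intro x
    rw [← NNReal.coe_le_coe]
    have h1 : ‖iteratedFDeriv ℝ 2 V x‖ ≤ C2 * (1 + ‖x‖^2) ^ (m - 1) := by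
      have := hC2 x
      norm_num at this
      exact this
    have hb1 : (1:ℝ) ≤ 1 + ‖x‖^2 := by nlinarith [sq_nonneg ‖x‖]
    have h2 : (1 + ‖x‖^2 : ℝ) ^ (m - 1) ≤ 1 :=
      Real.rpow_le_one_of_one_le_of_nonpos hb1 (by linarith)
    have heq : ‖fderiv ℝ (fderiv ℝ V) x‖ = ‖iteratedFDeriv ℝ 2 V x‖ := by
      rw [← norm_iteratedFDeriv_zero (𝕜 := ℝ) (f := fderiv ℝ (fderiv ℝ V)) (x := x)]
      rw [norm_iteratedFDeriv_fderiv, norm_iteratedFDeriv_fderiv]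
    rw [coe_nnnorm, heq, Real.coe_toNNReal _ hC2pos.le]
    calc ‖iteratedFDeriv ℝ 2 V x‖ ≤ C2 * (1 + ‖x‖^2) ^ (m - 1) := h1
      _ ≤ C2 * 1 := by apply mul_le_mul_of_nonneg_left h2 hC2pos.le
      _ = C2 := mul_one _
  have hlipfd : LipschitzWith C2.toNNReal (fderiv ℝ V) :=
    lipschitzWith_of_nnnorm_fderiv_le (hfd.differentiable (by simp)) hbound
  refine ⟨C2.toNNReal, ?_⟩
  have : (fun x => gradient V x) =
      (fun f => (InnerProductSpace.toDual ℝ (E d)).symm f) ∘ (fderiv ℝ V) := rfl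
  rw [this]
  simpa using (InnerProductSpace.toDual ℝ (E d)).symm.lipschitz.comp hlipfd

/-- The flow is Lipschitz in the initial condition, uniformly for `t ∈ [-T,T]`. -/
lemma flow_lipschitz {d : ℕ} (V : E d → ℝ)
    (K : NNReal) (hK : LipschitzWith K (fun x => gradient V x))
    (φ : ℝ → E d × E d → E d × E d) (hφ : IsHamFlow V φ) (T : ℝ) (hT : 0 < T) :
    ∃ L : ℝ, 1 ≤ L ∧ ∀ t ∈ Set.Icc (-T) T, ∀ ρ₁ ρ₂ : E d × E d,
      dist (φ t ρ₁) (φ t ρ₂) ≤ L * dist ρ₁ ρ₂ := by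
  have hLF : LipschitzWith (max 1 K)
      (fun p : E d × E d => (p.2, -(gradient V p.1))) := by
    have h1 : LipschitzWith 1 (fun p : E d × E d => p.2) := LipschitzWith.prod_snd
    have h2 : LipschitzWith K (fun p : E d × E d => -(gradient V p.1)) := by
      have h := (hK.comp (LipschitzWith.prod_fst (α := E d) (β := E d))).neg
      rw [mul_one] at h
      exact h
    exact h1.prodMk h2
  set K' : ℝ := ((max 1 K : NNReal) : ℝ) with hK'
  have hK'0 : 0 ≤ K' := NNReal.coe_nonneg _
  have hcont : ∀ ρ : E d × E d, Continuous (fun s => φ s ρ) := fun ρ =>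
    hφ.1.continuous.comp (continuous_id.prodMk continuous_const)
  refine ⟨Real.exp (K' * T), Real.one_le_exp (by positivity), ?_⟩
  intro t ht ρ₁ ρ₂
  rcases le_or_gt 0 t with h0t | h0t
  · have := dist_le_of_trajectories_ODE (v := fun _ y => (y.2, -(gradient V y.1)))
      (fun _ => hLF)
      ((hcont ρ₁).continuousOn) (fun s _ => (hφ.2.2 s ρ₁).hasDerivWithinAt)
      ((hcont ρ₂).continuousOn) (fun s _ => (hφ.2.2 s ρ₂).hasDerivWithinAt)
      (le_of_eq (by rw [hφ.2.1, hφ.2.1])) t ⟨h0t, ht.2⟩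
    calc dist (φ t ρ₁) (φ t ρ₂) ≤ dist ρ₁ ρ₂ * Real.exp (K' * (t - 0)) := this
      _ ≤ dist ρ₁ ρ₂ * Real.exp (K' * T) := by
          apply mul_le_mul_of_nonneg_left _ dist_nonneg
          apply Real.exp_le_exp.2
          apply mul_le_mul_of_nonneg_left _ hK'0
          linarith [ht.2]
      _ = Real.exp (K' * T) * dist ρ₁ ρ₂ := mul_comm _ _
  · have hψ : ∀ (ρ : E d × E d) (s : ℝ), HasDerivAt (fun u => φ (-u) ρ)
        (-(((φ (-s) ρ).2, -(gradient V (φ (-s) ρ).1)) : E d × E d)) s := by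
      intro ρ s
      have h2 := (hφ.2.2 (-s) ρ).scomp s (hasDerivAt_neg s)
      simp [Function.comp] at h2 ⊢
      exact h2
    have := dist_le_of_trajectories_ODE
      (v := fun (_ : ℝ) (y : E d × E d) => -((y.2, -(gradient V y.1)) : E d × E d))
      (f := fun s => φ (-s) ρ₁) (g := fun s => φ (-s) ρ₂) (a := 0) (b := T)
      (δ := dist ρ₁ ρ₂)
      (fun _ => hLF.neg)
      (((hcont ρ₁).comp continuous_neg).continuousOn)
      (fun s _ => (hψ ρ₁ s).hasDerivWithinAt)
      (((hcont ρ₂).comp continuous_neg).continuousOn)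
      (fun s _ => (hψ ρ₂ s).hasDerivWithinAt)
      (by simp [hφ.2.1]) (-t) ⟨by linarith, by linarith [ht.1]⟩
    simp only [neg_neg] at this
    calc dist (φ t ρ₁) (φ t ρ₂) ≤ dist ρ₁ ρ₂ * Real.exp (K' * (-t - 0)) := this
      _ ≤ dist ρ₁ ρ₂ * Real.exp (K' * T) := by
          apply mul_le_mul_of_nonneg_left _ dist_nonneg
          apply Real.exp_le_exp.2
          apply mul_le_mul_of_nonneg_left _ hK'0
          linarith [ht.1]
      _ = Real.exp (K' * T) * dist ρ₁ ρ₂ := mul_comm _ _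

lemma order_aux (C h s : ℝ) (hC : 0 < C) (hh : 0 ≤ h) (hs : 0 ≤ s) :
    2*h + s + 2*C*C*(h+C)*(1+s) ≤ (3+2*C*C*(1+C))*(1+h)*(1+s) := by
  nlinarith [mul_nonneg hh hs, mul_nonneg (mul_nonneg hC.le hC.le) hs,
    mul_nonneg (mul_nonneg (mul_nonneg hC.le hC.le) hC.le) hh,
    mul_nonneg (mul_nonneg (mul_nonneg (mul_nonneg hC.le hC.le) hC.le) hh) hs]

lemma weight_aux (L α β r : ℝ) (hL : 1 ≤ L) (hα : 0 ≤ α) (hβ : 0 ≤ β) (hr : 0 ≤ r)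
    (h : β ≤ α + L*r) : 1 + β^2 ≤ 2*L^2*(1+α^2)*(1+r^2) := by
  nlinarith [sq_nonneg (L*r - α), mul_self_le_mul_self hβ h, sq_nonneg (α*r),
    mul_nonneg (mul_nonneg hα hα) (mul_nonneg hr hr), sq_nonneg α, sq_nonneg r,
    mul_le_mul hL hL zero_le_one (le_trans zero_le_one hL), sq_nonneg (L*α*r)]

lemma sqrt_aux (A R2 h s hp : ℝ) (hA : 1 ≤ A) (hR2 : 1 ≤ R2) (hh : 0 ≤ h) (hs : 0 ≤ s)
    (hle : hp ≤ A*(1+h)*(1+s)) : R2 + hp ≤ 2*A*(R2+h)*(1+s) := by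
  nlinarith [mul_nonneg hh hs, mul_nonneg (sub_nonneg.2 hA) hs,
    mul_nonneg (sub_nonneg.2 hA) hh, mul_nonneg (sub_nonneg.2 hR2) hs,
    mul_nonneg (mul_nonneg (sub_nonneg.2 hA) (sub_nonneg.2 hR2)) hs,
    mul_nonneg (mul_nonneg (sub_nonneg.2 hA) hh) hs]

set_option maxHeartbeats 1000000 in
/-- The Hamiltonian is an order function. -/
lemma ham_order {d : ℕ} (V : E d → ℝ) (m : ℝ) (hV : AssumptionA V m) :
    ∃ A : ℝ, 1 ≤ A ∧ ∀ ρ₀ ρ : E d × E d,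
      ham V (ρ₀ + ρ) ≤ A * (1 + ham V ρ₀) * (1 + ‖ρ‖ ^ 2) := by
  obtain ⟨C, hCpos, hC⟩ := hV.2.2.2.2.1
  have hm0 : 0 < m := hV.2.2.1
  have hm1 : m ≤ 1 := hV.2.2.2.1
  have hV0 := hV.2.1
  have hA1 : (1:ℝ) ≤ 3 + 2 * C * C * (1 + C) := by
    nlinarith [mul_nonneg (mul_nonneg hCpos.le hCpos.le) (by linarith : (0:ℝ) ≤ 1 + C)]
  refine ⟨3 + 2 * C * C * (1 + C), hA1, ?_⟩
  intro ρ₀ ρ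
  have hρ1 : ‖ρ.1‖ ≤ ‖ρ‖ := norm_fst_le ρ
  have hρ2 : ‖ρ.2‖ ≤ ‖ρ‖ := norm_snd_le ρ
  -- kinetic part
  have hkin : (1/2 : ℝ) * ‖ρ₀.2 + ρ.2‖ ^ 2 ≤ ‖ρ₀.2‖ ^ 2 + ‖ρ‖ ^ 2 := by
    have h := norm_add_le ρ₀.2 ρ.2
    nlinarith [norm_nonneg ρ₀.2, norm_nonneg ρ.2, norm_nonneg ρ, norm_nonneg (ρ₀.2 + ρ.2),
      sq_nonneg (‖ρ₀.2‖ - ‖ρ.2‖), hρ2]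
  -- potential part
  have hpot : V (ρ₀.1 + ρ.1) ≤ 2 * C * C * (V ρ₀.1 + C) * (1 + ‖ρ‖ ^ 2) := by
    have hb0 : (1:ℝ) ≤ 1 + ‖ρ₀.1‖ ^ 2 := by nlinarith [sq_nonneg ‖ρ₀.1‖]
    have hb1 : (1:ℝ) ≤ 1 + ‖ρ.1‖ ^ 2 := by nlinarith [sq_nonneg ‖ρ.1‖]
    have h1 : (1 + ‖ρ₀.1 + ρ.1‖ ^ 2 : ℝ) ≤ 2 * (1 + ‖ρ₀.1‖ ^ 2) * (1 + ‖ρ.1‖ ^ 2) := by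
      have h := norm_add_le ρ₀.1 ρ.1
      nlinarith [norm_nonneg ρ₀.1, norm_nonneg ρ.1, norm_nonneg (ρ₀.1 + ρ.1),
        sq_nonneg (‖ρ₀.1‖ - ‖ρ.1‖), sq_nonneg ‖ρ₀.1‖, sq_nonneg ‖ρ.1‖]
    have h2 : ((1 + ‖ρ₀.1 + ρ.1‖ ^ 2 : ℝ)) ^ m ≤
        (2 * (1 + ‖ρ₀.1‖ ^ 2) * (1 + ‖ρ.1‖ ^ 2)) ^ m :=
      Real.rpow_le_rpow (by positivity) h1 hm0.le
    have h3 : (2 * (1 + ‖ρ₀.1‖ ^ 2) * (1 + ‖ρ.1‖ ^ 2) : ℝ) ^ m =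
        (2:ℝ) ^ m * (1 + ‖ρ₀.1‖ ^ 2) ^ m * (1 + ‖ρ.1‖ ^ 2) ^ m := by
      rw [Real.mul_rpow (by positivity) (by positivity),
        Real.mul_rpow (by positivity) (by positivity)]
    have h4 : (2:ℝ) ^ m ≤ 2 := by
      calc (2:ℝ) ^ m ≤ (2:ℝ) ^ (1:ℝ) :=
        Real.rpow_le_rpow_of_exponent_le one_le_two hm1
      _ = 2 := Real.rpow_one 2
    have h5 : ((1 + ‖ρ.1‖ ^ 2 : ℝ)) ^ m ≤ 1 + ‖ρ‖ ^ 2 := by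
      calc ((1 + ‖ρ.1‖ ^ 2 : ℝ)) ^ m ≤ ((1 + ‖ρ.1‖ ^ 2 : ℝ)) ^ (1:ℝ) :=
        Real.rpow_le_rpow_of_exponent_le hb1 hm1
      _ = 1 + ‖ρ.1‖ ^ 2 := Real.rpow_one _
      _ ≤ 1 + ‖ρ‖ ^ 2 := by nlinarith [norm_nonneg ρ.1, norm_nonneg ρ]
    have h6 : ((1 + ‖ρ₀.1‖ ^ 2 : ℝ)) ^ m ≤ C * (V ρ₀.1 + C) := by
      have hlow := (hC ρ₀.1).1
      have : C⁻¹ * (1 + ‖ρ₀.1‖ ^ 2) ^ m ≤ V ρ₀.1 + C := by linarith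
      calc ((1 + ‖ρ₀.1‖ ^ 2 : ℝ)) ^ m = C * (C⁻¹ * (1 + ‖ρ₀.1‖ ^ 2) ^ m) := by
            field_simp
      _ ≤ C * (V ρ₀.1 + C) := mul_le_mul_of_nonneg_left this hCpos.le
    have hup := (hC (ρ₀.1 + ρ.1)).2
    have hVnonneg := hV0 ρ₀.1
    have hpm : (0:ℝ) ≤ (1 + ‖ρ₀.1‖ ^ 2 : ℝ) ^ m := by positivity
    have hrn : (0:ℝ) ≤ 1 + ‖ρ‖ ^ 2 := by positivity
    calc V (ρ₀.1 + ρ.1) ≤ C * (1 + ‖ρ₀.1 + ρ.1‖ ^ 2) ^ m := hup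
      _ ≤ C * ((2:ℝ) ^ m * (1 + ‖ρ₀.1‖ ^ 2) ^ m * (1 + ‖ρ.1‖ ^ 2) ^ m) := by
          rw [← h3]; exact mul_le_mul_of_nonneg_left h2 hCpos.le
      _ ≤ C * (2 * (C * (V ρ₀.1 + C)) * (1 + ‖ρ‖ ^ 2)) := by
          apply mul_le_mul_of_nonneg_left _ hCpos.le
          have hmul1 : (2:ℝ) ^ m * (1 + ‖ρ₀.1‖ ^ 2) ^ m ≤ 2 * (C * (V ρ₀.1 + C)) := by
            apply mul_le_mul h4 h6 hpm (by norm_num)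
          apply mul_le_mul hmul1 h5 (by positivity) (by nlinarith)
      _ = 2 * C * C * (V ρ₀.1 + C) * (1 + ‖ρ‖ ^ 2) := by ring
  -- assemble
  have hham0 : (1/2 : ℝ) * ‖ρ₀.2‖ ^ 2 ≤ ham V ρ₀ := by
    simp only [ham]; nlinarith [hV0 ρ₀.1]
  have hVle : V ρ₀.1 ≤ ham V ρ₀ := by
    simp only [ham]; nlinarith [sq_nonneg ‖ρ₀.2‖]
  have hhnn : 0 ≤ ham V ρ₀ := by
    simp only [ham]; nlinarith [sq_nonneg ‖ρ₀.2‖, hV0 ρ₀.1]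
  have hadd : ham V (ρ₀ + ρ) = (1/2 : ℝ) * ‖ρ₀.2 + ρ.2‖ ^ 2 + V (ρ₀.1 + ρ.1) := rfl
  rw [hadd]
  have hrn : (0:ℝ) ≤ ‖ρ‖ ^ 2 := by positivity
  have key := order_aux C (ham V ρ₀) (‖ρ‖ ^ 2) hCpos hhnn hrn
  have step : (1/2 : ℝ) * ‖ρ₀.2 + ρ.2‖ ^ 2 + V (ρ₀.1 + ρ.1)
      ≤ 2 * ham V ρ₀ + ‖ρ‖ ^ 2 + 2*C*C*(ham V ρ₀ + C)*(1 + ‖ρ‖ ^ 2) := by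
    have hp2 : 2*C*C*(V ρ₀.1 + C)*(1 + ‖ρ‖ ^ 2) ≤ 2*C*C*(ham V ρ₀ + C)*(1 + ‖ρ‖ ^ 2) := by
      exact mul_le_mul_of_nonneg_right (mul_le_mul_of_nonneg_left
        (by linarith [hVle]) (by positivity : (0:ℝ) ≤ 2*C*C)) (by positivity)
    linarith [hkin, hpot, hham0, hp2]
  linarith [key, step]

set_option maxHeartbeats 1000000 in
/-- `f_R ∘ φᵗ` is an order function with structure constants uniform in
`t ∈ [-T,T]` and `R ≥ 1`. -/
theorem stmt_8 (d : ℕ) (hd : 1 ≤ d) (V : E d → ℝ) (m : ℝ) (hV : AssumptionA V m)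
    (φ : ℝ → E d × E d → E d × E d) (hφ : IsHamFlow V φ)
    (T : ℝ) (hT : 0 < T) (ν : ℝ) (hν : 1 / 2 < ν) :
    ∃ C > 0, ∃ N : ℝ, 0 ≤ N ∧ ∀ R : ℝ, 1 ≤ R → ∀ t ∈ Set.Icc (-T) T,
      ∀ ρ₀ ρ : E d × E d,
        fR V ν R (φ t (ρ₀ + ρ)) ≤ C * fR V ν R (φ t ρ₀) * (1 + ‖ρ‖ ^ 2) ^ (N / 2) := by
  obtain ⟨K, hK⟩ := grad_lipschitz V m hV
  obtain ⟨L, hL1, hL⟩ := flow_lipschitz V K hK φ hφ T hT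
  obtain ⟨A, hA1, hA⟩ := ham_order V m hV
  have hν0 : 0 < ν := by linarith
  have hCpos : 0 < (2*L^2)^ν * Real.sqrt (2*A) :=
    mul_pos (Real.rpow_pos_of_pos (by nlinarith) _) (Real.sqrt_pos.2 (by linarith))
  refine ⟨(2*L^2)^ν * Real.sqrt (2*A), hCpos, 2*ν+1, by linarith, ?_⟩
  intro R hR t ht ρ₀ ρ
  have hR0 : (0:ℝ) < R := lt_of_lt_of_le one_pos hR
  set u : E d × E d := φ t (ρ₀ + ρ) with hu
  set v : E d × E d := φ t ρ₀ with hv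
  have hcons1 : ham V u = ham V (ρ₀ + ρ) := ham_flow_const V hV.1 φ hφ t _
  have hcons2 : ham V v = ham V ρ₀ := ham_flow_const V hV.1 φ hφ t _
  -- distance bound
  have hdist : ‖v.1 - u.1‖ ≤ L * ‖ρ‖ := by
    have h1 : ‖v.1 - u.1‖ ≤ ‖v - u‖ := norm_fst_le (v - u)
    have h4 := hL t ht ρ₀ (ρ₀ + ρ)
    have h5 : dist ρ₀ (ρ₀ + ρ) = ‖ρ‖ := by
      rw [dist_eq_norm]; simp
    rw [h5] at h4
    calc ‖v.1 - u.1‖ ≤ ‖v - u‖ := h1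
      _ = dist v u := (dist_eq_norm v u).symm
      _ ≤ L * ‖ρ‖ := h4
  -- weight part
  have ha0 : (0:ℝ) < 1 + ‖R⁻¹ • u.1‖ ^ 2 := by positivity
  have hb0 : (0:ℝ) < 1 + ‖R⁻¹ • v.1‖ ^ 2 := by positivity
  have hs0 : (0:ℝ) < 1 + ‖ρ‖ ^ 2 := by positivity
  have htri : ‖R⁻¹ • v.1‖ ≤ ‖R⁻¹ • u.1‖ + L * ‖ρ‖ := by
    have heq : R⁻¹ • v.1 = R⁻¹ • u.1 + R⁻¹ • (v.1 - u.1) := by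
      rw [← smul_add]; congr 1; abel
    have hsc : ‖R⁻¹ • (v.1 - u.1)‖ ≤ L * ‖ρ‖ := by
      rw [norm_smul, Real.norm_eq_abs, abs_of_pos (inv_pos.2 hR0)]
      have hinv : R⁻¹ ≤ 1 := inv_le_one_of_one_le₀ hR
      calc R⁻¹ * ‖v.1 - u.1‖ ≤ 1 * ‖v.1 - u.1‖ :=
        mul_le_mul_of_nonneg_right hinv (norm_nonneg _)
      _ = ‖v.1 - u.1‖ := one_mul _
      _ ≤ L * ‖ρ‖ := hdist
    rw [heq]
    calc ‖R⁻¹ • u.1 + R⁻¹ • (v.1 - u.1)‖ ≤ ‖R⁻¹ • u.1‖ + ‖R⁻¹ • (v.1 - u.1)‖ :=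
      norm_add_le _ _
    _ ≤ ‖R⁻¹ • u.1‖ + L * ‖ρ‖ := by linarith [hsc]
  have hb : 1 + ‖R⁻¹ • v.1‖ ^ 2 ≤ 2*L^2 * (1 + ‖R⁻¹ • u.1‖ ^ 2) * (1 + ‖ρ‖ ^ 2) :=
    weight_aux L ‖R⁻¹ • u.1‖ ‖R⁻¹ • v.1‖ ‖ρ‖ hL1 (norm_nonneg _) (norm_nonneg _)
      (norm_nonneg _) htri
  have hbν : (1 + ‖R⁻¹ • v.1‖ ^ 2) ^ ν ≤
      (2*L^2) ^ ν * (1 + ‖R⁻¹ • u.1‖ ^ 2) ^ ν * (1 + ‖ρ‖ ^ 2) ^ ν := by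
    calc (1 + ‖R⁻¹ • v.1‖ ^ 2) ^ ν
        ≤ (2*L^2 * (1 + ‖R⁻¹ • u.1‖ ^ 2) * (1 + ‖ρ‖ ^ 2)) ^ ν :=
          Real.rpow_le_rpow hb0.le hb hν0.le
      _ = (2*L^2) ^ ν * (1 + ‖R⁻¹ • u.1‖ ^ 2) ^ ν * (1 + ‖ρ‖ ^ 2) ^ ν := by
          rw [Real.mul_rpow (by positivity) (by positivity),
            Real.mul_rpow (by positivity) (by positivity)]
  have key1 : (1 + ‖R⁻¹ • u.1‖ ^ 2) ^ (-ν) ≤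
      ((2*L^2) ^ ν * (1 + ‖ρ‖ ^ 2) ^ ν) * (1 + ‖R⁻¹ • v.1‖ ^ 2) ^ (-ν) := by
    have h1 : (1 + ‖R⁻¹ • u.1‖ ^ 2 : ℝ) ^ (-ν) = 1 / (1 + ‖R⁻¹ • u.1‖ ^ 2) ^ ν := by
      rw [Real.rpow_neg ha0.le, one_div]
    have h2 : (1 + ‖R⁻¹ • v.1‖ ^ 2 : ℝ) ^ (-ν) = 1 / (1 + ‖R⁻¹ • v.1‖ ^ 2) ^ ν := by
      rw [Real.rpow_neg hb0.le, one_div]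
    rw [h1, h2, mul_one_div, div_le_div_iff₀ (by positivity) (by positivity)]
    calc 1 * (1 + ‖R⁻¹ • v.1‖ ^ 2) ^ ν = (1 + ‖R⁻¹ • v.1‖ ^ 2) ^ ν := one_mul _
      _ ≤ (2*L^2) ^ ν * (1 + ‖R⁻¹ • u.1‖ ^ 2) ^ ν * (1 + ‖ρ‖ ^ 2) ^ ν := hbν
      _ = (2*L^2) ^ ν * (1 + ‖ρ‖ ^ 2) ^ ν * (1 + ‖R⁻¹ • u.1‖ ^ 2) ^ ν := by ring
  -- energy part
  have hh0 : 0 ≤ ham V ρ₀ := by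
    have := hV.2.1 ρ₀.1
    simp only [ham]; nlinarith [sq_nonneg ‖ρ₀.2‖]
  have hR2 : (1:ℝ) ≤ R^2 := by nlinarith
  have hham_le : R^2 + ham V (ρ₀ + ρ) ≤ 2*A*(R^2 + ham V ρ₀)*(1 + ‖ρ‖ ^ 2) :=
    sqrt_aux A (R^2) (ham V ρ₀) (‖ρ‖^2) (ham V (ρ₀ + ρ)) hA1 hR2 hh0 (by positivity)
      (hA ρ₀ ρ)
  have key2 : Real.sqrt (R^2 + ham V (ρ₀ + ρ)) ≤
      Real.sqrt (2*A) * Real.sqrt (R^2 + ham V ρ₀) * (1 + ‖ρ‖ ^ 2) ^ ((1:ℝ)/2) := by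
    calc Real.sqrt (R^2 + ham V (ρ₀ + ρ))
        ≤ Real.sqrt (2*A*(R^2 + ham V ρ₀)*(1 + ‖ρ‖ ^ 2)) := Real.sqrt_le_sqrt hham_le
      _ = Real.sqrt (2*A) * Real.sqrt (R^2 + ham V ρ₀) * Real.sqrt (1 + ‖ρ‖ ^ 2) := by
          rw [Real.sqrt_mul (by positivity), Real.sqrt_mul (by positivity)]
      _ = Real.sqrt (2*A) * Real.sqrt (R^2 + ham V ρ₀) * (1 + ‖ρ‖ ^ 2) ^ ((1:ℝ)/2) := by
          rw [show Real.sqrt (1 + ‖ρ‖ ^ 2) = (1 + ‖ρ‖ ^ 2) ^ ((1:ℝ)/2) from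
            Real.sqrt_eq_rpow _]
  -- assemble
  have hfin : fR V ν R u ≤
      ((2*L^2)^ν * Real.sqrt (2*A)) * fR V ν R v * (1 + ‖ρ‖ ^ 2) ^ (ν + (1:ℝ)/2) := by
    simp only [fR, hcons1, hcons2]
    calc (1 + ‖R⁻¹ • u.1‖ ^ 2) ^ (-ν) * Real.sqrt (R ^ 2 + ham V (ρ₀ + ρ))
        ≤ (((2*L^2) ^ ν * (1 + ‖ρ‖ ^ 2) ^ ν) * (1 + ‖R⁻¹ • v.1‖ ^ 2) ^ (-ν)) *
          (Real.sqrt (2*A) * Real.sqrt (R^2 + ham V ρ₀) * (1 + ‖ρ‖ ^ 2) ^ ((1:ℝ)/2)) :=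
          mul_le_mul key1 key2 (Real.sqrt_nonneg _) (by positivity)
      _ = ((2*L^2)^ν * Real.sqrt (2*A)) *
          ((1 + ‖R⁻¹ • v.1‖ ^ 2) ^ (-ν) * Real.sqrt (R ^ 2 + ham V ρ₀)) *
          ((1 + ‖ρ‖ ^ 2) ^ ν * (1 + ‖ρ‖ ^ 2) ^ ((1:ℝ)/2)) := by ring
      _ = ((2*L^2)^ν * Real.sqrt (2*A)) *
          ((1 + ‖R⁻¹ • v.1‖ ^ 2) ^ (-ν) * Real.sqrt (R ^ 2 + ham V ρ₀)) *
          (1 + ‖ρ‖ ^ 2) ^ (ν + (1:ℝ)/2) := by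
          rw [← Real.rpow_add hs0]
  have hexp : (2*ν+1)/2 = ν + (1:ℝ)/2 := by ring
  rw [hexp]
  exact hfin

end
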